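/- Let U, V, X, A, Y, Z be random variables on finite sets forming the Markov chain U − V − (X, A) − (Y, Z), i.e., U is conditionally independent of (X, A, Y, Z) given V, and the pair (U, V) is conditionally independent of (Y, Z) given (X, A). Then I(X; A, V) − I(U; Y | A) − I(V; Z | A, U) = I(X; A) + I(V; X | A, Y) + I(V; Y | A, U) − I(V; Z | A, U). -/
import Mathlib


open MeasureTheory

/-- `prob μ X x = P[X = x]`. -/
noncomputable def prob {Ω : Type*} [MeasurableSpace Ω] (μ : Measure Ω)
    {α : Type*} (X : Ω → α) (x : α) : ℝ :=
  (μ (X ⁻¹' {x})).toReal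

/-- Shannon entropy (in bits) of a random variable with values in a finite set. -/
noncomputable def ent {Ω : Type*} [MeasurableSpace Ω] (μ : Measure Ω)
    {α : Type*} [Fintype α] (X : Ω → α) : ℝ :=
  ∑ x : α, -(prob μ X x * Real.logb 2 (prob μ X x))

/-- Conditional entropy `H(X | Y)` in bits. -/
noncomputable def condEnt {Ω : Type*} [MeasurableSpace Ω] (μ : Measure Ω)
    {α β : Type*} [Fintype α] [Fintype β] (X : Ω → α) (Y : Ω → β) : ℝ :=
  ent μ (fun ω => (X ω, Y ω)) - ent μ Y

/-- Mutual information `I(X; Y)` in bits. -/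
noncomputable def mutInf {Ω : Type*} [MeasurableSpace Ω] (μ : Measure Ω)
    {α β : Type*} [Fintype α] [Fintype β] (X : Ω → α) (Y : Ω → β) : ℝ :=
  ent μ X + ent μ Y - ent μ (fun ω => (X ω, Y ω))

/-- Conditional mutual information `I(X; Y | Z)` in bits. -/
noncomputable def condMutInf {Ω : Type*} [MeasurableSpace Ω] (μ : Measure Ω)
    {α β γ : Type*} [Fintype α] [Fintype β] [Fintype γ]
    (X : Ω → α) (Y : Ω → β) (Z : Ω → γ) : ℝ :=
  condEnt μ X Z - condEnt μ X (fun ω => (Y ω, Z ω))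

/-- `X` and `Y` are conditionally independent given `Z`:
`P[X=x, Y=y, Z=z] · P[Z=z] = P[X=x, Z=z] · P[Y=y, Z=z]` for all values. -/
def CondIndepRV {Ω : Type*} [MeasurableSpace Ω] (μ : Measure Ω)
    {α β γ : Type*} (X : Ω → α) (Y : Ω → β) (Z : Ω → γ) : Prop :=
  ∀ (x : α) (y : β) (z : γ),
    prob μ (fun ω => ((X ω, Y ω), Z ω)) ((x, y), z) * prob μ Z z =
      prob μ (fun ω => (X ω, Z ω)) (x, z) * prob μ (fun ω => (Y ω, Z ω)) (y, z)

section lemmas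
open scoped Classical
variable {Ω : Type*} [MeasurableSpace Ω] (μ : Measure Ω) [IsProbabilityMeasure μ]

lemma prob_nonneg' {α : Type*} (X : Ω → α) (x : α) : 0 ≤ prob μ X x :=
  ENNReal.toReal_nonneg

lemma prob_congr' {α β : Type*} (X : Ω → α) (Y : Ω → β) (x : α) (y : β)
    (h : X ⁻¹' {x} = Y ⁻¹' {y}) : prob μ X x = prob μ Y y := by
  unfold prob; rw [h]

lemma prob_comp_le {α β : Type*} (W : Ω → α) (g : α → β) (a : α) :
    prob μ W a ≤ prob μ (fun ω => g (W ω)) (g a) := by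
  refine (ENNReal.toReal_le_toReal (measure_ne_top μ _) (measure_ne_top μ _)).mpr ?_
  apply measure_mono
  intro ω hω
  simp only [Set.mem_preimage, Set.mem_singleton_iff] at *
  rw [hω]

lemma prob_comp' {α β : Type*} [Fintype α] [MeasurableSpace α] [MeasurableSingletonClass α]
    (W : Ω → α) (hW : Measurable W) (f : α → β) (b : β) :
    prob μ (fun ω => f (W ω)) b = ∑ a : α, if f a = b then prob μ W a else 0 := by
  have hset : (fun ω => f (W ω)) ⁻¹' {b}
      = ⋃ a ∈ Finset.univ.filter (fun a => f a = b), W ⁻¹' {a} := by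
    ext ω
    simp only [Set.mem_preimage, Set.mem_singleton_iff, Set.mem_iUnion,
      Finset.mem_filter, Finset.mem_univ, true_and]
    constructor
    · intro h; exact ⟨W ω, h, rfl⟩
    · rintro ⟨a, ha, h2⟩; subst h2; exact ha
  rw [prob, hset, measure_biUnion_finset ?_ (fun a _ => hW (measurableSet_singleton a))]
  · rw [ENNReal.toReal_sum (fun a _ => measure_ne_top μ _), Finset.sum_filter]
    rfl
  · intro a _ a' _ hne
    rw [Function.onFun, Set.disjoint_left]
    intro ω h1 h2
    simp only [Set.mem_preimage, Set.mem_singleton_iff] at h1 h2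
    exact hne (h1 ▸ h2 ▸ rfl)

lemma ent_comp_inj {α β : Type*} [Fintype α] [Fintype β]
    [MeasurableSpace α] [MeasurableSingletonClass α]
    (W : Ω → α) (hW : Measurable W) (f : α → β) (hf : Function.Injective f) :
    ent μ (fun ω => f (W ω)) = ent μ W := by
  have hp : ∀ a, prob μ (fun ω => f (W ω)) (f a) = prob μ W a := by
    intro a
    refine prob_congr' μ _ _ _ _ ?_
    ext ω; simp [hf.eq_iff]
  have hz : ∀ b, b ∉ Finset.univ.image f → prob μ (fun ω => f (W ω)) b = 0 := by
    intro b hb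
    have : (fun ω => f (W ω)) ⁻¹' {b} = ∅ := by
      ext ω
      simp only [Set.mem_preimage, Set.mem_singleton_iff, Set.mem_empty_iff_false, iff_false]
      intro h
      exact hb (Finset.mem_image.mpr ⟨W ω, Finset.mem_univ _, h⟩)
    simp [prob, this]
  unfold ent
  rw [show (∑ b : β, -(prob μ (fun ω => f (W ω)) b * Real.logb 2 (prob μ (fun ω => f (W ω)) b)))
      = ∑ b ∈ Finset.univ.image f, -(prob μ (fun ω => f (W ω)) b * Real.logb 2 (prob μ (fun ω => f (W ω)) b)) from
    (Finset.sum_subset (Finset.subset_univ _) (fun b _ hb => by rw [hz b hb]; simp)).symm]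
  rw [Finset.sum_image (fun a _ a' _ h => hf h)]
  exact Finset.sum_congr rfl fun a _ => by rw [hp]

lemma ent_comp_eq_sum {α β : Type*} [Fintype α] [Fintype β]
    [MeasurableSpace α] [MeasurableSingletonClass α]
    (W : Ω → α) (hW : Measurable W) (g : α → β) :
    ent μ (fun ω => g (W ω))
      = -∑ a : α, prob μ W a * Real.logb 2 (prob μ (fun ω => g (W ω)) (g a)) := by
  have key : ∀ b : β,
      prob μ (fun ω => g (W ω)) b * Real.logb 2 (prob μ (fun ω => g (W ω)) b)
        = ∑ a : α, if g a = b then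
            prob μ W a * Real.logb 2 (prob μ (fun ω => g (W ω)) (g a)) else 0 := by
    intro b
    nth_rewrite 1 [prob_comp' μ W hW g b]
    rw [Finset.sum_mul]
    refine Finset.sum_congr rfl fun a _ => ?_
    by_cases h : g a = b
    · simp [h]
    · simp [h]
  unfold ent
  rw [Finset.sum_neg_distrib]
  refine congrArg Neg.neg ?_
  calc ∑ b : β, prob μ (fun ω => g (W ω)) b * Real.logb 2 (prob μ (fun ω => g (W ω)) b)
      = ∑ b : β, ∑ a : α, (if g a = b then
          prob μ W a * Real.logb 2 (prob μ (fun ω => g (W ω)) (g a)) else 0) :=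
        Finset.sum_congr rfl fun b _ => key b
    _ = ∑ a : α, ∑ b : β, (if g a = b then
          prob μ W a * Real.logb 2 (prob μ (fun ω => g (W ω)) (g a)) else 0) :=
        Finset.sum_comm
    _ = ∑ a : α, prob μ W a * Real.logb 2 (prob μ (fun ω => g (W ω)) (g a)) := by
        refine Finset.sum_congr rfl fun a _ => ?_
        rw [Finset.sum_ite_eq]
        simp


lemma condIndep_ent {α β γ : Type*} [Fintype α] [Fintype β] [Fintype γ]
    [MeasurableSpace α] [MeasurableSingletonClass α]
    [MeasurableSpace β] [MeasurableSingletonClass β]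
    [MeasurableSpace γ] [MeasurableSingletonClass γ]
    (X : Ω → α) (Y : Ω → β) (Z : Ω → γ)
    (hX : Measurable X) (hY : Measurable Y) (hZ : Measurable Z)
    (h : CondIndepRV μ X Y Z) :
    ent μ (fun ω => (X ω, Z ω)) + ent μ (fun ω => (Y ω, Z ω))
      = ent μ (fun ω => (X ω, (Y ω, Z ω))) + ent μ Z := by
  set T : Ω → α × β × γ := fun ω => (X ω, (Y ω, Z ω)) with hTdef
  have hT : Measurable T := hX.prodMk (hY.prodMk hZ)
  have e1 : ent μ (fun ω => (X ω, Z ω))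
      = -∑ t : α × β × γ, prob μ T t *
          Real.logb 2 (prob μ (fun ω => (X ω, Z ω)) (t.1, t.2.2)) :=
    ent_comp_eq_sum μ T hT (fun t => (t.1, t.2.2))
  have e2 : ent μ (fun ω => (Y ω, Z ω))
      = -∑ t : α × β × γ, prob μ T t *
          Real.logb 2 (prob μ (fun ω => (Y ω, Z ω)) (t.2.1, t.2.2)) :=
    ent_comp_eq_sum μ T hT (fun t => (t.2.1, t.2.2))
  have e3 : ent μ Z
      = -∑ t : α × β × γ, prob μ T t * Real.logb 2 (prob μ Z t.2.2) :=
    ent_comp_eq_sum μ T hT (fun t => t.2.2)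
  have e0 : ent μ T
      = -∑ t : α × β × γ, prob μ T t * Real.logb 2 (prob μ T t) :=
    ent_comp_eq_sum μ T hT id
  have key : ∀ t : α × β × γ,
      prob μ T t * Real.logb 2 (prob μ (fun ω => (X ω, Z ω)) (t.1, t.2.2))
      + prob μ T t * Real.logb 2 (prob μ (fun ω => (Y ω, Z ω)) (t.2.1, t.2.2))
      = prob μ T t * Real.logb 2 (prob μ T t)
      + prob μ T t * Real.logb 2 (prob μ Z t.2.2) := by
    rintro ⟨x, y, z⟩
    by_cases hq : prob μ T (x, (y, z)) = 0
    · simp [hq]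
    · have hq' : 0 < prob μ T (x, (y, z)) :=
        lt_of_le_of_ne (prob_nonneg' μ T _) (Ne.symm hq)
      have h1 : prob μ T (x, (y, z)) ≤ prob μ (fun ω => (X ω, Z ω)) (x, z) :=
        prob_comp_le μ T (fun t => (t.1, t.2.2)) (x, (y, z))
      have h2 : prob μ T (x, (y, z)) ≤ prob μ (fun ω => (Y ω, Z ω)) (y, z) :=
        prob_comp_le μ T (fun t => (t.2.1, t.2.2)) (x, (y, z))
      have h3 : prob μ T (x, (y, z)) ≤ prob μ Z z :=
        prob_comp_le μ T (fun t => t.2.2) (x, (y, z))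
      have h1' := lt_of_lt_of_le hq' h1
      have h2' := lt_of_lt_of_le hq' h2
      have h3' := lt_of_lt_of_le hq' h3
      have hre : prob μ (fun ω => ((X ω, Y ω), Z ω)) ((x, y), z) = prob μ T (x, (y, z)) := by
        refine prob_congr' μ _ _ _ _ ?_
        ext ω
        simp only [Set.mem_preimage, Set.mem_singleton_iff, Prod.mk.injEq, hTdef]
        tauto
      have hci := h x y z
      rw [hre] at hci
      have hlog : Real.logb 2 (prob μ T (x, (y, z))) + Real.logb 2 (prob μ Z z)
          = Real.logb 2 (prob μ (fun ω => (X ω, Z ω)) (x, z))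
            + Real.logb 2 (prob μ (fun ω => (Y ω, Z ω)) (y, z)) := by
        rw [← Real.logb_mul (ne_of_gt hq') (ne_of_gt h3'),
          ← Real.logb_mul (ne_of_gt h1') (ne_of_gt h2'), hci]
      have expand : ∀ r s : ℝ, prob μ T (x,(y,z)) * r + prob μ T (x,(y,z)) * s
          = prob μ T (x,(y,z)) * (r + s) := fun r s => (mul_add _ _ _).symm
      rw [expand, expand, hlog]
  rw [e1, e2, e3, e0]
  have : (∑ t : α × β × γ, prob μ T t *
        Real.logb 2 (prob μ (fun ω => (X ω, Z ω)) (t.1, t.2.2)))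
      + (∑ t : α × β × γ, prob μ T t *
        Real.logb 2 (prob μ (fun ω => (Y ω, Z ω)) (t.2.1, t.2.2)))
      = (∑ t : α × β × γ, prob μ T t * Real.logb 2 (prob μ T t))
      + (∑ t : α × β × γ, prob μ T t * Real.logb 2 (prob μ Z t.2.2)) := by
    rw [← Finset.sum_add_distrib, ← Finset.sum_add_distrib]
    exact Finset.sum_congr rfl fun t _ => key t
  linarith

lemma condIndep_comp {α β γ α' β' : Type*} [Fintype α] [Fintype β] [Fintype γ]
    [MeasurableSpace α] [MeasurableSingletonClass α]
    [MeasurableSpace β] [MeasurableSingletonClass β]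
    [MeasurableSpace γ] [MeasurableSingletonClass γ]
    (X : Ω → α) (Y : Ω → β) (Z : Ω → γ)
    (hX : Measurable X) (hY : Measurable Y) (hZ : Measurable Z)
    (f : α → α') (g : β → β')
    (h : CondIndepRV μ X Y Z) :
    CondIndepRV μ (fun ω => f (X ω)) (fun ω => g (Y ω)) Z := by
  intro x' y' z
  have hXY : Measurable (fun ω => ((X ω, Y ω), Z ω)) := (hX.prodMk hY).prodMk hZ
  have hXZ : Measurable (fun ω => (X ω, Z ω)) := hX.prodMk hZ
  have hYZ : Measurable (fun ω => (Y ω, Z ω)) := hY.prodMk hZ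
  have eL : prob μ (fun ω => ((f (X ω), g (Y ω)), Z ω)) ((x', y'), z)
      = ∑ p : (α × β) × γ, if (f p.1.1 = x' ∧ g p.1.2 = y') ∧ p.2 = z then
          prob μ (fun ω => ((X ω, Y ω), Z ω)) p else 0 := by
    rw [prob_comp' μ (fun ω => ((X ω, Y ω), Z ω)) hXY
      (fun p => ((f p.1.1, g p.1.2), p.2)) ((x', y'), z)]
    exact Finset.sum_congr rfl fun p _ => by simp [Prod.ext_iff]
  have eX : prob μ (fun ω => (f (X ω), Z ω)) (x', z)
      = ∑ p : α × γ, if f p.1 = x' ∧ p.2 = z then prob μ (fun ω => (X ω, Z ω)) p else 0 := by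
    rw [prob_comp' μ (fun ω => (X ω, Z ω)) hXZ (fun p => (f p.1, p.2)) (x', z)]
    exact Finset.sum_congr rfl fun p _ => by simp [Prod.ext_iff]
  have eY : prob μ (fun ω => (g (Y ω), Z ω)) (y', z)
      = ∑ p : β × γ, if g p.1 = y' ∧ p.2 = z then prob μ (fun ω => (Y ω, Z ω)) p else 0 := by
    rw [prob_comp' μ (fun ω => (Y ω, Z ω)) hYZ (fun p => (g p.1, p.2)) (y', z)]
    exact Finset.sum_congr rfl fun p _ => by simp [Prod.ext_iff]
  rw [eL, eX, eY, Finset.sum_mul]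
  have eX' : (∑ p : α × γ, if f p.1 = x' ∧ p.2 = z then prob μ (fun ω => (X ω, Z ω)) p else 0)
      = ∑ x : α, if f x = x' then prob μ (fun ω => (X ω, Z ω)) (x, z) else 0 := by
    rw [Fintype.sum_prod_type]
    refine Finset.sum_congr rfl fun x _ => ?_
    by_cases hP : f x = x'
    · simp [hP]
    · simp [hP]
  have eY' : (∑ p : β × γ, if g p.1 = y' ∧ p.2 = z then prob μ (fun ω => (Y ω, Z ω)) p else 0)
      = ∑ y : β, if g y = y' then prob μ (fun ω => (Y ω, Z ω)) (y, z) else 0 := by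
    rw [Fintype.sum_prod_type]
    refine Finset.sum_congr rfl fun y _ => ?_
    by_cases hP : g y = y'
    · simp [hP]
    · simp [hP]
  rw [eX', eY', Finset.sum_mul_sum]
  conv_lhs => rw [Fintype.sum_prod_type]
  conv_lhs => rw [Fintype.sum_prod_type]
  refine Finset.sum_congr rfl fun x _ => ?_
  refine Finset.sum_congr rfl fun y _ => ?_
  by_cases h1 : f x = x'
  · by_cases h2 : g y = y'
    · simp only [h1, h2, true_and, if_true]
      rw [← Finset.sum_mul, Finset.sum_ite_eq' Finset.univ z
        (fun z0 => prob μ (fun ω => ((X ω, Y ω), Z ω)) ((x, y), z0))]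
      simp only [Finset.mem_univ, if_true]
      exact h x y z
    · simp [h1, h2]
  · simp [h1]

lemma condIndep_weakUnion {α β γ δ : Type*} [Fintype α] [Fintype β] [Fintype γ] [Fintype δ]
    [MeasurableSpace α] [MeasurableSingletonClass α]
    [MeasurableSpace β] [MeasurableSingletonClass β]
    [MeasurableSpace γ] [MeasurableSingletonClass γ]
    [MeasurableSpace δ] [MeasurableSingletonClass δ]
    (X : Ω → α) (Y : Ω → β) (W : Ω → δ) (Z : Ω → γ)
    (hX : Measurable X) (hY : Measurable Y) (hW : Measurable W) (hZ : Measurable Z)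
    (h : CondIndepRV μ X (fun ω => (Y ω, W ω)) Z) :
    CondIndepRV μ X Y (fun ω => (W ω, Z ω)) := by
  have h' : CondIndepRV μ X W Z :=
    condIndep_comp μ X (fun ω => (Y ω, W ω)) Z hX (hY.prodMk hW) hZ id Prod.snd h
  intro x y wz
  obtain ⟨w, z⟩ := wz
  have r1 : prob μ (fun ω => ((X ω, (Y ω, W ω)), Z ω)) ((x, (y, w)), z)
      = prob μ (fun ω => ((X ω, Y ω), (W ω, Z ω))) ((x, y), (w, z)) := by
    refine prob_congr' μ _ _ _ _ ?_
    ext ω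
    simp only [Set.mem_preimage, Set.mem_singleton_iff, Prod.mk.injEq]
    tauto
  have r2 : prob μ (fun ω => ((X ω, W ω), Z ω)) ((x, w), z)
      = prob μ (fun ω => (X ω, (W ω, Z ω))) (x, (w, z)) := by
    refine prob_congr' μ _ _ _ _ ?_
    ext ω
    simp only [Set.mem_preimage, Set.mem_singleton_iff, Prod.mk.injEq]
    tauto
  have r3 : prob μ (fun ω => ((Y ω, W ω), Z ω)) ((y, w), z)
      = prob μ (fun ω => (Y ω, (W ω, Z ω))) (y, (w, z)) := by
    refine prob_congr' μ _ _ _ _ ?_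
    ext ω
    simp only [Set.mem_preimage, Set.mem_singleton_iff, Prod.mk.injEq]
    tauto
  by_cases hz : prob μ Z z = 0
  · have hle : prob μ (fun ω => (W ω, Z ω)) (w, z) ≤ prob μ Z z :=
      prob_comp_le μ (fun ω => (W ω, Z ω)) Prod.snd (w, z)
    have hWZ0 : prob μ (fun ω => (W ω, Z ω)) (w, z) = 0 :=
      le_antisymm (hz ▸ hle) (prob_nonneg' μ _ _)
    have hle2 : prob μ (fun ω => (X ω, (W ω, Z ω))) (x, (w, z))
        ≤ prob μ (fun ω => (W ω, Z ω)) (w, z) :=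
      prob_comp_le μ (fun ω => (X ω, (W ω, Z ω))) Prod.snd (x, (w, z))
    have hXWZ0 : prob μ (fun ω => (X ω, (W ω, Z ω))) (x, (w, z)) = 0 :=
      le_antisymm (hWZ0 ▸ hle2) (prob_nonneg' μ _ _)
    rw [hWZ0, hXWZ0]
    ring
  · rw [← r1, ← r2, ← r3]
    apply mul_right_cancel₀ hz
    have hci := h x (y, w) z
    beta_reduce at hci
    have hw := h' x w z
    linear_combination prob μ (fun ω => (W ω, Z ω)) (w, z) * hci
      - prob μ (fun ω => ((Y ω, W ω), Z ω)) ((y, w), z) * hw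

end lemmas

/-- Under the Markov chain `U − V − (X,A) − (Y,Z)`,
`I(X;A,V) − I(U;Y|A) − I(V;Z|A,U)
  = I(X;A) + I(V;X|A,Y) + I(V;Y|A,U) − I(V;Z|A,U)`. -/
theorem stmt10 {Ω 𝒰 𝒱 𝒳 𝒜 𝒴 𝒵 : Type*} [MeasurableSpace Ω]
    (μ : Measure Ω) [IsProbabilityMeasure μ]
    [Fintype 𝒰] [Fintype 𝒱] [Fintype 𝒳] [Fintype 𝒜] [Fintype 𝒴] [Fintype 𝒵]
    [MeasurableSpace 𝒰] [MeasurableSingletonClass 𝒰]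
    [MeasurableSpace 𝒱] [MeasurableSingletonClass 𝒱]
    [MeasurableSpace 𝒳] [MeasurableSingletonClass 𝒳]
    [MeasurableSpace 𝒜] [MeasurableSingletonClass 𝒜]
    [MeasurableSpace 𝒴] [MeasurableSingletonClass 𝒴]
    [MeasurableSpace 𝒵] [MeasurableSingletonClass 𝒵]
    (U : Ω → 𝒰) (V : Ω → 𝒱) (X : Ω → 𝒳) (A : Ω → 𝒜) (Y : Ω → 𝒴) (Z : Ω → 𝒵)
    (hU : Measurable U) (hV : Measurable V) (hX : Measurable X)
    (hA : Measurable A) (hY : Measurable Y) (hZ : Measurable Z)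
    (hMarkov1 : CondIndepRV μ U (fun ω => (X ω, A ω, Y ω, Z ω)) V)
    (hMarkov2 : CondIndepRV μ (fun ω => (U ω, V ω)) (fun ω => (Y ω, Z ω))
      (fun ω => (X ω, A ω))) :
    mutInf μ X (fun ω => (A ω, V ω)) - condMutInf μ U Y A -
        condMutInf μ V Z (fun ω => (A ω, U ω)) =
      mutInf μ X A + condMutInf μ V X (fun ω => (A ω, Y ω)) +
        condMutInf μ V Y (fun ω => (A ω, U ω)) -
        condMutInf μ V Z (fun ω => (A ω, U ω)) := by
  -- (a)  V ⟂ Y | (X,A)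
  have ha : CondIndepRV μ V Y (fun ω => (X ω, A ω)) :=
    condIndep_comp μ (fun ω => (U ω, V ω)) (fun ω => (Y ω, Z ω)) (fun ω => (X ω, A ω))
      (hU.prodMk hV) (hY.prodMk hZ) (hX.prodMk hA) Prod.snd Prod.fst hMarkov2
  have ea := condIndep_ent μ V Y (fun ω => (X ω, A ω)) hV hY (hX.prodMk hA) ha
  -- (b)  U ⟂ Y | (A,V)
  have hb0 : CondIndepRV μ U (fun ω => (Y ω, A ω)) V :=
    condIndep_comp μ U (fun ω => (X ω, A ω, Y ω, Z ω)) V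
      hU (hX.prodMk (hA.prodMk (hY.prodMk hZ))) hV
      id (fun p => (p.2.2.1, p.2.1)) hMarkov1
  have hb : CondIndepRV μ U Y (fun ω => (A ω, V ω)) :=
    condIndep_weakUnion μ U Y A V hU hY hA hV hb0
  have eb := condIndep_ent μ U Y (fun ω => (A ω, V ω)) hU hY (hA.prodMk hV) hb
  -- relabelings
  have e1 : ent μ (fun ω => (U ω, A ω)) = ent μ (fun ω => (A ω, U ω)) :=
    ent_comp_inj μ (fun ω => (A ω, U ω)) (hA.prodMk hU) Prod.swap Prod.swap_injective
  have e2 : ent μ (fun ω => (Y ω, A ω)) = ent μ (fun ω => (A ω, Y ω)) :=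
    ent_comp_inj μ (fun ω => (A ω, Y ω)) (hA.prodMk hY) Prod.swap Prod.swap_injective
  have e3 : ent μ (fun ω => (U ω, (Y ω, A ω))) = ent μ (fun ω => (Y ω, (A ω, U ω))) :=
    ent_comp_inj μ (fun ω => (Y ω, (A ω, U ω))) (hY.prodMk (hA.prodMk hU))
      (fun p => (p.2.2, (p.1, p.2.1)))
      (by rintro ⟨a, b, c⟩ ⟨a', b', c'⟩ hpq; simp only [Prod.mk.injEq] at hpq ⊢; tauto)
  have e4 : ent μ (fun ω => (X ω, (A ω, V ω))) = ent μ (fun ω => (V ω, (X ω, A ω))) :=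
    ent_comp_inj μ (fun ω => (V ω, (X ω, A ω))) (hV.prodMk (hX.prodMk hA))
      (fun p => (p.2.1, (p.2.2, p.1)))
      (by rintro ⟨a, b, c⟩ ⟨a', b', c'⟩ hpq; simp only [Prod.mk.injEq] at hpq ⊢; tauto)
  have e5 : ent μ (fun ω => (V ω, (A ω, Y ω))) = ent μ (fun ω => (Y ω, (A ω, V ω))) :=
    ent_comp_inj μ (fun ω => (Y ω, (A ω, V ω))) (hY.prodMk (hA.prodMk hV))
      (fun p => (p.2.2, (p.2.1, p.1)))
      (by rintro ⟨a, b, c⟩ ⟨a', b', c'⟩ hpq; simp only [Prod.mk.injEq] at hpq ⊢; tauto)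
  have e6 : ent μ (fun ω => (V ω, (A ω, U ω))) = ent μ (fun ω => (U ω, (A ω, V ω))) :=
    ent_comp_inj μ (fun ω => (U ω, (A ω, V ω))) (hU.prodMk (hA.prodMk hV))
      (fun p => (p.2.2, (p.2.1, p.1)))
      (by rintro ⟨a, b, c⟩ ⟨a', b', c'⟩ hpq; simp only [Prod.mk.injEq] at hpq ⊢; tauto)
  have e7 : ent μ (fun ω => (V ω, (Y ω, (A ω, U ω))))
      = ent μ (fun ω => (U ω, (Y ω, (A ω, V ω)))) :=
    ent_comp_inj μ (fun ω => (U ω, (Y ω, (A ω, V ω))))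
      (hU.prodMk (hY.prodMk (hA.prodMk hV)))
      (fun p => (p.2.2.2, (p.2.1, (p.2.2.1, p.1))))
      (by rintro ⟨a, b, c, d⟩ ⟨a', b', c', d'⟩ hpq
          simp only [Prod.mk.injEq] at hpq ⊢; tauto)
  have e8 : ent μ (fun ω => (V ω, (X ω, (A ω, Y ω))))
      = ent μ (fun ω => (V ω, (Y ω, (X ω, A ω)))) :=
    ent_comp_inj μ (fun ω => (V ω, (Y ω, (X ω, A ω))))
      (hV.prodMk (hY.prodMk (hX.prodMk hA)))
      (fun p => (p.1, (p.2.2.1, (p.2.2.2, p.2.1))))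
      (by rintro ⟨a, b, c, d⟩ ⟨a', b', c', d'⟩ hpq
          simp only [Prod.mk.injEq] at hpq ⊢; tauto)
  have e9 : ent μ (fun ω => (X ω, (A ω, Y ω))) = ent μ (fun ω => (Y ω, (X ω, A ω))) :=
    ent_comp_inj μ (fun ω => (Y ω, (X ω, A ω))) (hY.prodMk (hX.prodMk hA))
      (fun p => (p.2.1, (p.2.2, p.1)))
      (by rintro ⟨a, b, c⟩ ⟨a', b', c'⟩ hpq; simp only [Prod.mk.injEq] at hpq ⊢; tauto)
  simp only [mutInf, condMutInf, condEnt]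
  linarith [ea, eb, e1, e2, e3, e4, e5, e6, e7, e8, e9]
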